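/- For any pointed set X_⊥ with base point ⊥, the pair (T_o(X_⊥), 3^X) with the action α[f, g](x) = f(x) if α(x) = T, g(x) if α(x) = F, and ⊥ if α(x) = U, satisfies all eight C-set axioms: U[s,t] = ⊥ (the constant ⊥ function), F[s,t] = t, (¬α)[s,t] = α[t,s], α[α[s,t],u] = α[s,u], α[s,α[t,u]] = α[s,u], (α ∧ β)[s,t] = α[β[s,t],t], α[β[s,t],β[u,v]] = β[α[s,u],α[t,v]], and: if α[s,t] = α[t,t] then (α ∧ β)[s,t] = (α ∧ β)[t,t]. -/
import Mathlib


inductive Three | T | F | U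
deriving DecidableEq

namespace Three

def neg : Three → Three
  | T => F
  | F => T
  | U => U

def and : Three → Three → Three
  | T, x => x
  | F, _ => F
  | U, _ => U

def or : Three → Three → Three
  | T, _ => T
  | F, x => x
  | U, _ => U

end Three

/-- The if-then-else action of `α : X → 3` on functions on `X_⊥ = Option X`. -/
def fact {X : Type*} (α : X → Three) (f g : Option X → Option X) :
    Option X → Option X
  | none => none
  | some x =>
    match α x with
    | Three.T => f (some x)
    | Three.F => g (some x)
    | Three.U => none

/-- The functional model `(T_o(X_⊥), 3^X)` satisfies all eight C-set axioms. -/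
theorem stmt4 {X : Type*} (α β : X → Three) (s t u v : Option X → Option X)
    (hs : s none = none) (ht : t none = none)
    (hu : u none = none) (hv : v none = none) :
    (fact (fun _ => Three.U) s t = fun _ => none) ∧
    (fact (fun _ => Three.F) s t = t) ∧
    (fact (fun x => (α x).neg) s t = fact α t s) ∧
    (fact α (fact α s t) u = fact α s u) ∧
    (fact α s (fact α t u) = fact α s u) ∧
    (fact (fun x => (α x).and (β x)) s t = fact α (fact β s t) t) ∧
    (fact α (fact β s t) (fact β u v) = fact β (fact α s u) (fact α t v)) ∧
    (fact α s t = fact α t t →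
      fact (fun x => (α x).and (β x)) s t = fact (fun x => (α x).and (β x)) t t) := by
  refine ⟨?_, ?_, ?_, ?_, ?_, ?_, ?_, ?_⟩
  · funext x; cases x <;> rfl
  · funext x; cases x with
    | none => exact ht.symm
    | some x => rfl
  · funext x; cases x with
    | none => rfl
    | some x => simp only [fact]; cases α x <;> rfl
  · funext x; cases x with
    | none => rfl
    | some x => simp only [fact]; cases h : α x <;> simp [fact, h]
  · funext x; cases x with
    | none => rfl
    | some x => simp only [fact]; cases h : α x <;> simp [fact, h]
  · funext x; cases x with
    | none => rfl
    | some x =>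
      simp only [fact]; cases h : α x <;> cases h2 : β x <;> simp [Three.and, fact, h, h2]
  · funext x; cases x with
    | none => rfl
    | some x =>
      simp only [fact]; cases h : α x <;> cases h2 : β x <;> simp [fact, h, h2, hs, ht, hu, hv]
  · intro h; funext x; cases x with
    | none => rfl
    | some x =>
      have hx := congrFun h (some x)
      simp only [fact] at hx ⊢
      cases ha : α x <;> cases hb : β x <;> simp [Three.and, ha, hb] <;>
        simpa [fact, ha] using hx
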